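/- arXiv:1509.07145 — 3 statements merged into one kernel-verified Lean document; each statement's English description precedes it below -/
import Mathlib

section
/- If H is a (t,l)-CS matrix of size r×n with n ≥ 2t and t ≥ 1, then r ≥ 2(t+l). -/
open Matrix Finset

/-! If `r < 2(t + l)`, pick `2t` columns and at most `2l` rows. The map sending a vector supported
on those columns to the entries of `Hz` outside the chosen rows goes from dimension `2t` to
dimension `< 2t`, so it has a nonzero kernel element `z`: then `‖z‖₀ ≤ 2t` but `‖Hz‖₀ ≤ 2l`. -/

/-- Hamming weight (number of nonzero coordinates) of a real vector. -/
noncomputable def wt {m : ℕ} (v : Fin m → ℝ) : ℕ := (Finset.univ.filter (fun i => v i ≠ 0)).card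

lemma wt_le_card_of_support_subset {m : ℕ} {v : Fin m → ℝ} {s : Finset (Fin m)}
    (hv : ∀ i ∉ s, v i = 0) : wt v ≤ #s :=
  card_le_card fun i hi => by_contra fun his => (mem_filter.mp hi).2 (hv i his)

lemma Matrix.exists_ne_zero_support_subset_mulVec_support_subset {K ι κ : Type*} [Field K]
    [Fintype ι] [Fintype κ] [DecidableEq κ] (A : Matrix κ ι K) {S : Finset ι} {R : Finset κ}
    (hcard : Fintype.card κ < #S + #R) :
    ∃ z : ι → K, z ≠ 0 ∧ (∀ j ∉ S, z j = 0) ∧ ∀ i ∉ R, (A *ᵥ z) i = 0 := by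
  let f : (S → K) →ₗ[K] ((Rᶜ : Finset κ) → K) :=
    LinearMap.funLeft K K Subtype.val ∘ₗ A.mulVecLin ∘ₗ
      Function.ExtendByZero.linearMap K Subtype.val
  have hdim : Module.finrank K ((Rᶜ : Finset κ) → K) < Module.finrank K (S → K) := by
    simp only [Module.finrank_fintype_fun_eq_card, Fintype.card_coe, card_compl]
    have := R.card_le_univ
    omega
  obtain ⟨x, hx, hx0⟩ :=
    (Submodule.ne_bot_iff _).mp (LinearMap.ker_ne_bot_of_finrank_lt (f := f) hdim)
  refine ⟨Function.extend Subtype.val x 0, ?_, ?_, ?_⟩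
  · intro h
    apply hx0
    funext j
    simpa [Subtype.val_injective.extend_apply] using congrFun h j
  · intro j hj
    exact Function.extend_apply' _ _ _ fun ⟨j', hj'⟩ => hj (hj' ▸ j'.2)
  · intro i hi
    exact congrFun (LinearMap.mem_ker.mp hx) ⟨i, mem_compl.mpr hi⟩

theorem singleton_bound_CS {r n t l : ℕ} (H : Matrix (Fin r) (Fin n) ℝ)
    (ht : 1 ≤ t) (hn : 2 * t ≤ n)
    (hCS : ∀ z : Fin n → ℝ, z ≠ 0 → wt z ≤ 2 * t → 2 * l + 1 ≤ wt (H.mulVec z)) :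
    2 * (t + l) ≤ r := by
  by_contra! hr
  obtain ⟨S, -, hS⟩ := exists_subset_card_eq (s := (univ : Finset (Fin n))) (by simpa using hn)
  obtain ⟨R, -, hR⟩ := exists_subset_card_eq (s := (univ : Finset (Fin r)))
    (n := min (2 * l) r) (by simp)
  obtain ⟨z, hz0, hzS, hHzR⟩ := H.exists_ne_zero_support_subset_mulVec_support_subset
    (S := S) (R := R) (by simp only [Fintype.card_fin]; omega)
  have hwt_z := hS ▸ wt_le_card_of_support_subset hzS
  have hwt_Hz := hR ▸ wt_le_card_of_support_subset hHzR
  have hwt_Hz_lower := hCS z hz0 hwt_z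
  omega
end

section
/- Let H̃ be an r̃×n real matrix with any 2t columns linearly independent and G an r̃×r matrix of rank r̃ generating a code of minimum Hamming weight ≥ 2l+1. Let H = GᵀH̃ and suppose ŝ = Hx + e with ||x||₀ ≤ t and ||e||₀ ≤ l. Then the codeword c ∈ rowspace(Gᵀ applied appropriately) nearest to ŝ in Hamming distance is Gᵀ(H̃x), and it is uniquely determined: any vector c′ = Gᵀu′ with Hamming distance at most l from ŝ satisfies u′ = H̃x. -/
open Matrix Finset

/-- Hamming distance between two real vectors. -/
noncomputable def hd {m : ℕ} (v w : Fin m → ℝ) : ℕ := (Finset.univ.filter (fun i => v i ≠ w i)).card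

lemma hd_eq_wt_sub {m : ℕ} (v w : Fin m → ℝ) : hd v w = wt (v - w) := by
  unfold hd wt
  congr 1
  ext i
  simp [sub_ne_zero]

lemma hd_triangle {m : ℕ} (u v w : Fin m → ℝ) : hd u w ≤ hd u v + hd v w := by
  unfold hd
  refine le_trans (Finset.card_le_card ?_) (Finset.card_union_le _ _)
  intro i hi
  simp only [mem_union, mem_filter, mem_univ, true_and] at *
  by_contra h
  push_neg at h
  exact hi (h.1.trans h.2)

lemma hd_comm {m : ℕ} (v w : Fin m → ℝ) : hd v w = hd w v := by
  unfold hd; congr 1; ext i; simp [ne_comm]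

theorem syndrome_recovery_stage {r rt n t l : ℕ}
    (Ht : Matrix (Fin rt) (Fin n) ℝ) (G : Matrix (Fin rt) (Fin r) ℝ)
    (hHt : ∀ z : Fin n → ℝ, z ≠ 0 → wt z ≤ 2 * t → Ht.mulVec z ≠ 0)
    (hG : ∀ u : Fin rt → ℝ, G.vecMul u ≠ 0 → 2 * l + 1 ≤ wt (G.vecMul u))
    (hrank : Function.Injective fun u : Fin rt → ℝ => G.vecMul u)
    (x : Fin n → ℝ) (e : Fin r → ℝ) (hx : wt x ≤ t) (he : wt e ≤ l)
    (shat : Fin r → ℝ) (hshat : shat = (Gᵀ * Ht).mulVec x + e) :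
    hd (G.vecMul (Ht.mulVec x)) shat ≤ l ∧
      ∀ u' : Fin rt → ℝ, hd (G.vecMul u') shat ≤ l → u' = Ht.mulVec x := by
  have hkey : (Gᵀ * Ht).mulVec x = G.vecMul (Ht.mulVec x) := by
    rw [← Matrix.mulVec_mulVec, Matrix.mulVec_transpose]
  have h1 : hd (G.vecMul (Ht.mulVec x)) shat ≤ l := by
    rw [hshat, hkey, hd_eq_wt_sub]
    simpa [wt] using he
  refine ⟨h1, fun u' hu' => ?_⟩
  have h2 : hd (G.vecMul u') (G.vecMul (Ht.mulVec x)) ≤ 2 * l := by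
    calc hd (G.vecMul u') (G.vecMul (Ht.mulVec x))
        ≤ hd (G.vecMul u') shat + hd shat (G.vecMul (Ht.mulVec x)) := hd_triangle _ _ _
      _ ≤ l + l := add_le_add hu' (by rw [hd_comm]; exact h1)
      _ = 2 * l := by ring
  have h3 : G.vecMul (u' - Ht.mulVec x) = G.vecMul u' - G.vecMul (Ht.mulVec x) := by
    simp [Matrix.sub_vecMul]
  by_contra hne
  have hnz : G.vecMul (u' - Ht.mulVec x) ≠ 0 := by
    rw [h3, sub_ne_zero]
    intro h
    exact hne (hrank (by simpa [sub_eq_zero] using h))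
  have := hG _ hnz
  rw [h3] at this
  rw [hd_eq_wt_sub] at h2
  omega
end

section
/- If a real r×n matrix H satisfies ||Hz||₀ ≥ 2l+1 for all nonzero z with ||z||₀ ≤ 2t (with t ≥ 1, n ≥ 2t), then any 2t columns of H are linearly independent, and in particular r ≥ 2t + 2l ≥ 2t. -/
/-!
Restrict `H` to the `2t`-dimensional space of vectors supported on a fixed set of `2t`
coordinates: its image is a linear code of dimension `2t` all of whose nonzero words have weight
`> 2l`. Such a word cannot vanish outside any set of `2l` coordinates, so forgetting those
coordinates is still injective, and `2t ≤ r - 2l` (the Singleton bound).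
-/

open Matrix Finset

theorem wt_eq_hammingNorm {m : ℕ} (v : Fin m → ℝ) : wt v = hammingNorm v := rfl

theorem hammingNorm_extend_zero {α ι R : Type*} [Fintype α] [Fintype ι] [DecidableEq R] [Zero R]
    {e : α → ι} (he : Function.Injective e) (x : α → R) :
    hammingNorm (Function.extend e x 0) = hammingNorm x := by
  classical
  have hsupp : ({i | Function.extend e x 0 i ≠ 0} : Finset ι) =
      ({a | x a ≠ 0} : Finset α).image e := by
    ext i
    by_cases hi : ∃ a, e a = i
    · obtain ⟨a, rfl⟩ := hi
      simp [he.extend_apply, he.eq_iff]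
    · simp only [mem_filter, mem_univ, true_and, mem_image, Function.extend_apply' _ _ _ hi]
      push Not at hi
      simp [hi]
  rw [hammingNorm, hammingNorm, hsupp, card_image_of_injective _ he]

/-- The Singleton bound of coding theory. -/
theorem finrank_add_le_card_of_lt_hammingNorm {K E ι : Type*} [Ring K] [StrongRankCondition K]
    [DecidableEq K] [AddCommGroup E] [Module K E] [Nontrivial E] [Fintype ι]
    (f : E →ₗ[K] ι → K) (k : ℕ) (hf : ∀ x, x ≠ 0 → k < hammingNorm (f x)) :
    Module.finrank K E + k ≤ Fintype.card ι := by
  classical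
  obtain ⟨x₀, hx₀⟩ := exists_ne (0 : E)
  have hk : k ≤ Fintype.card ι := (hf x₀ hx₀).le.trans hammingNorm_le_card_fintype
  obtain ⟨s, -, hs⟩ :=
    exists_subset_card_eq (s := (univ : Finset ι)) (n := k) (by simpa using hk)
  set g := LinearMap.funLeft K K ((↑) : (sᶜ : Finset ι) → ι) ∘ₗ f
  have hg : Function.Injective g := by
    rw [← LinearMap.ker_eq_bot, LinearMap.ker_eq_bot']
    intro x hx
    by_contra hne
    have hsupp : ({i | f x i ≠ 0} : Finset ι) ⊆ s := by
      intro i hi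
      by_contra his
      have hxi : f x i = 0 := by
        simpa [g, LinearMap.funLeft] using congrFun hx ⟨i, by simpa using his⟩
      exact (mem_filter.mp hi).2 hxi
    exact (hf x hne).not_ge (hs ▸ card_le_card hsupp)
  have := LinearMap.finrank_le_finrank_of_injective hg
  simp only [Module.finrank_fintype_fun_eq_card, Fintype.card_coe, card_compl, hs] at this
  omega

theorem CS_implies_columns_indep {r n t l : ℕ} (H : Matrix (Fin r) (Fin n) ℝ)
    (ht : 1 ≤ t) (hn : 2 * t ≤ n)
    (hCS : ∀ z : Fin n → ℝ, z ≠ 0 → wt z ≤ 2 * t → 2 * l + 1 ≤ wt (H.mulVec z)) :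
    (∀ z : Fin n → ℝ, z ≠ 0 → wt z ≤ 2 * t → H.mulVec z ≠ 0) ∧
      2 * t + 2 * l ≤ r := by
  have hker : ∀ z : Fin n → ℝ, z ≠ 0 → wt z ≤ 2 * t → H.mulVec z ≠ 0 :=
    fun z hz hw hHz => by simpa [wt_eq_hammingNorm, hHz, hammingNorm_zero] using hCS z hz hw
  refine ⟨hker, ?_⟩
  have : Nonempty (Fin (2 * t)) := ⟨⟨0, by omega⟩⟩
  have hext := Fin.castLE_injective hn
  simpa using finrank_add_le_card_of_lt_hammingNorm
    (H.mulVecLin ∘ₗ Function.ExtendByZero.linearMap ℝ (Fin.castLE hn)) (2 * l) fun z hz => by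
      have hw : hammingNorm (Function.ExtendByZero.linearMap ℝ (Fin.castLE hn) z) =
          hammingNorm z := hammingNorm_extend_zero hext z
      refine hCS _ ?_ ?_
      · rwa [← hammingNorm_ne_zero_iff, hw, hammingNorm_ne_zero_iff]
      · simpa [wt_eq_hammingNorm, hw] using hammingNorm_le_card_fintype (x := z)
end
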